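/- arXiv:2102.10058 — 5 statements merged into one kernel-verified Lean document; each statement's English description precedes it below -/
import Mathlib

section
/- Hodge decomposition: if B₁ : C₁ → C₀ and B₂ : C₂ → C₁ are linear maps between finite-dimensional real inner product spaces satisfying B₁ ∘ B₂ = 0, and Δ₁ = B₁^T B₁ + B₂ B₂^T, then C₁ = im(B₂) ⊕ im(B₁^T) ⊕ ker(Δ₁) as an orthogonal direct sum. -/
open scoped RealInnerProductSpace InnerProductSpace

/-! The Laplacian `Δ = A† A + B B†` satisfies `⟪Δ z, z⟫ = ‖A z‖² + ‖B† z‖²`, so its kernel is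
`ker A ∩ ker B† = (range A† + range B)ᗮ`. Hence the middle space splits as `(range B + range A†) ⊕ ker Δ`,
and `range B ⟂ range A†` because `⟪B x, A† y⟫ = ⟪A B x, y⟫ = 0`. -/

namespace LinearMap

variable {𝕜 E F G : Type*} [RCLike 𝕜]
  [NormedAddCommGroup E] [InnerProductSpace 𝕜 E] [FiniteDimensional 𝕜 E]
  [NormedAddCommGroup F] [InnerProductSpace 𝕜 F] [FiniteDimensional 𝕜 F]
  [NormedAddCommGroup G] [InnerProductSpace 𝕜 G]

theorem isOrtho_range_range_adjoint {A : E →ₗ[𝕜] F} {B : G →ₗ[𝕜] E} (h : A ∘ₗ B = 0) :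
    range B ⟂ range (adjoint A) := by
  rw [Submodule.isOrtho_iff_le, orthogonal_range, adjoint_adjoint]
  exact range_le_ker_iff.mpr h

variable [FiniteDimensional 𝕜 G]

theorem inner_adjoint_comp_add_comp_adjoint_apply_self (A : E →ₗ[𝕜] F) (B : G →ₗ[𝕜] E) (z : E) :
    ⟪(adjoint A ∘ₗ A + B ∘ₗ adjoint B) z, z⟫_𝕜 = ((‖A z‖ ^ 2 + ‖adjoint B z‖ ^ 2 : ℝ) : 𝕜) := by
  rw [add_apply, inner_add_left, comp_apply, comp_apply, adjoint_inner_left,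
    ← adjoint_inner_right B, inner_self_eq_norm_sq_to_K, inner_self_eq_norm_sq_to_K]
  push_cast
  ring

theorem ker_adjoint_comp_add_comp_adjoint (A : E →ₗ[𝕜] F) (B : G →ₗ[𝕜] E) :
    ker (adjoint A ∘ₗ A + B ∘ₗ adjoint B) = ker A ⊓ ker (adjoint B) := by
  ext z
  simp only [Submodule.mem_inf, mem_ker]
  constructor
  · intro hz
    have hsum : ‖A z‖ ^ 2 + ‖adjoint B z‖ ^ 2 = 0 := by
      have := inner_adjoint_comp_add_comp_adjoint_apply_self A B z
      rwa [hz, inner_zero_left, eq_comm, RCLike.ofReal_eq_zero] at this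
    obtain ⟨hA, hB⟩ := (add_eq_zero_iff_of_nonneg (sq_nonneg _) (sq_nonneg _)).mp hsum
    exact ⟨norm_eq_zero.mp (pow_eq_zero_iff two_ne_zero |>.mp hA),
      norm_eq_zero.mp (pow_eq_zero_iff two_ne_zero |>.mp hB)⟩
  · rintro ⟨hA, hB⟩
    simp [hA, hB]

theorem ker_adjoint_comp_add_comp_adjoint_eq_orthogonal (A : E →ₗ[𝕜] F) (B : G →ₗ[𝕜] E) :
    ker (adjoint A ∘ₗ A + B ∘ₗ adjoint B) = (range B ⊔ range (adjoint A))ᗮ := by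
  rw [ker_adjoint_comp_add_comp_adjoint, ← Submodule.inf_orthogonal, orthogonal_range,
    orthogonal_range, adjoint_adjoint, inf_comm]

end LinearMap

/-- Hodge decomposition: if B₁B₂ = 0 and Δ₁ = B₁ᵀB₁ + B₂B₂ᵀ, then
`C₁ = im(B₂) ⊕ im(B₁ᵀ) ⊕ ker(Δ₁)` as an orthogonal direct sum. -/
theorem hodge_decomposition
    {C₀ C₁ C₂ : Type*}
    [NormedAddCommGroup C₀] [InnerProductSpace ℝ C₀] [FiniteDimensional ℝ C₀]
    [NormedAddCommGroup C₁] [InnerProductSpace ℝ C₁] [FiniteDimensional ℝ C₁]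
    [NormedAddCommGroup C₂] [InnerProductSpace ℝ C₂] [FiniteDimensional ℝ C₂]
    (B₁ : C₁ →ₗ[ℝ] C₀) (B₂ : C₂ →ₗ[ℝ] C₁)
    (h : B₁.comp B₂ = 0) :
    let Δ₁ : C₁ →ₗ[ℝ] C₁ :=
      (LinearMap.adjoint B₁).comp B₁ + B₂.comp (LinearMap.adjoint B₂)
    (∀ x ∈ LinearMap.range B₂, ∀ y ∈ LinearMap.range (LinearMap.adjoint B₁),
      ⟪x, y⟫ = 0) ∧
    (∀ x ∈ LinearMap.range B₂, ∀ z ∈ LinearMap.ker Δ₁, ⟪x, z⟫ = 0) ∧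
    (∀ y ∈ LinearMap.range (LinearMap.adjoint B₁), ∀ z ∈ LinearMap.ker Δ₁,
      ⟪y, z⟫ = 0) ∧
    LinearMap.range B₂ ⊔ LinearMap.range (LinearMap.adjoint B₁) ⊔
      LinearMap.ker Δ₁ = ⊤ := by
  intro Δ₁
  have hker :
      LinearMap.ker Δ₁ = (LinearMap.range B₂ ⊔ LinearMap.range (LinearMap.adjoint B₁))ᗮ :=
    LinearMap.ker_adjoint_comp_add_comp_adjoint_eq_orthogonal B₁ B₂
  refine ⟨fun x hx y hy => (LinearMap.isOrtho_range_range_adjoint h).inner_eq hx hy,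
    fun x hx z hz => ?_, fun y hy z hz => ?_, ?_⟩
  · exact Submodule.inner_right_of_mem_orthogonal (Submodule.mem_sup_left hx) (hker ▸ hz)
  · exact Submodule.inner_right_of_mem_orthogonal (Submodule.mem_sup_right hy) (hker ▸ hz)
  · rw [hker]
    exact Submodule.sup_orthogonal_of_hasOrthogonalProjection
end

section
/- If φ : ℝ → ℝ is odd with φ(0) = 0 and is continuous and satisfies φ(γa) = −φ(γb) for all γ ∈ ℝ for some a ≠ ±b with φ(a) ≠ 0, then a contradiction follows; equivalently, a continuous function cannot satisfy the 'self-similar alternating' condition with nonzero value. -/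
open Filter Topology

/-! If `φ(γa) = -φ(γb)` with `|b| < |a|`, then `|φ|` is invariant under `x ↦ (b/a) x`, a contraction
towards `0`; iterating it and letting `φ` be continuous at `0` forces `|φ a| = |φ 0| = 0`. -/

theorem norm_eq_norm_zero_of_norm_comp_smul {𝕜 E F : Type*} [NormedField 𝕜]
    [NormedAddCommGroup E] [NormedSpace 𝕜 E] [SeminormedAddCommGroup F] {φ : E → F}
    (hφ : ContinuousAt φ 0) {r : 𝕜} (hr : ‖r‖ < 1) (h : ∀ x, ‖φ (r • x)‖ = ‖φ x‖) (x : E) :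
    ‖φ x‖ = ‖φ 0‖ := by
  have hiter : ∀ n : ℕ, ‖φ (r ^ n • x)‖ = ‖φ x‖ := by
    intro n
    induction n with
    | zero => simp
    | succ n ih => rw [pow_succ', mul_smul, h, ih]
  have hlim : Tendsto (fun n : ℕ => r ^ n • x) atTop (𝓝 0) := by
    simpa using (tendsto_pow_atTop_nhds_zero_of_norm_lt_one hr).smul_const x
  have hnorm : Tendsto (fun n : ℕ => ‖φ (r ^ n • x)‖) atTop (𝓝 ‖φ 0‖) :=
    (hφ.tendsto.comp hlim).norm
  simp only [hiter] at hnorm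
  exact tendsto_nhds_unique tendsto_const_nhds hnorm

theorem eq_zero_of_comp_mul_eq_neg_comp_mul {φ : ℝ → ℝ} (hφ : ContinuousAt φ 0) (h0 : φ 0 = 0)
    {a b : ℝ} (hba : |b| < |a|) (h : ∀ γ : ℝ, φ (γ * a) = -φ (γ * b)) : φ a = 0 := by
  have ha : a ≠ 0 := abs_pos.mp ((abs_nonneg b).trans_lt hba)
  have hr : ‖b / a‖ < 1 := by
    rw [Real.norm_eq_abs, abs_div]
    exact (div_lt_one ((abs_nonneg b).trans_lt hba)).mpr hba
  have hflip : ∀ x : ℝ, φ (b / a * x) = -φ x := by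
    intro x
    have := h (x / a)
    rw [div_mul_cancel₀ x ha] at this
    rw [this, neg_neg, div_mul_comm]
  have := norm_eq_norm_zero_of_norm_comp_smul hφ hr
    (fun x => by rw [smul_eq_mul, hflip, norm_neg]) a
  rwa [h0, norm_zero, norm_eq_zero] at this

theorem no_continuous_self_similar_general (φ : ℝ → ℝ)
    (hcont : Continuous φ)
    (h0 : φ 0 = 0)
    (a b : ℝ) (hab : a ≠ b) (hab' : a ≠ -b)
    (h3 : ∀ γ : ℝ, φ (γ * a) = -φ (γ * b))
    (h2 : φ a ≠ 0) :
    False := by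
  have habs : |a| ≠ |b| := fun h => (abs_eq_abs.mp h).elim hab hab'
  rcases habs.lt_or_gt with hlt | hgt
  · have hb : φ b = 0 :=
      eq_zero_of_comp_mul_eq_neg_comp_mul hcont.continuousAt h0 hlt fun γ => by rw [h3, neg_neg]
    exact h2 (by simpa [hb] using h3 1)
  · exact h2 (eq_zero_of_comp_mul_eq_neg_comp_mul hcont.continuousAt h0 hgt h3)

/-- A continuous odd function cannot satisfy the self-similar alternating
condition φ(γa) = -φ(γb) (a ≠ ±b) with nonzero value φ(a) ≠ 0. -/
theorem no_continuous_self_similar (φ : ℝ → ℝ)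
    (hcont : Continuous φ)
    (hodd : ∀ t : ℝ, φ (-t) = -φ t) (h0 : φ 0 = 0)
    (a b : ℝ) (hab : a ≠ b) (hab' : a ≠ -b)
    (h3 : ∀ γ : ℝ, φ (γ * a) = -φ (γ * b))
    (h2 : φ a ≠ 0) :
    False :=
  no_continuous_self_similar_general φ hcont h0 a b hab hab' h3 h2
end

section
/- If φ = id (the identity activation) and the layer update is c^{ℓ+1} = B₂B₂^T c^ℓ w₂^ℓ + c^ℓ w₁^ℓ + B₁^T B₁ c^ℓ w₀^ℓ with scalar weights, then for an input c^0 = B₁^T w + x + B₂ y with x ∈ ker(Δ₁), the final readout B₁ c^L is independent of B₂ and of y and x; it depends only on B₁ and w. -/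
/-- With the identity activation, the readout `B₁ c^L` of the linear SCoNe
iteration is independent of `B₂`, of the curl component `y`, and of the
harmonic component `x`: two runs sharing `B₁`, the potential `w` and the
weights produce the same readout. -/
theorem linear_scone_readout_independent {n m p p' : ℕ} (L : ℕ)
    (B₁ : Matrix (Fin n) (Fin m) ℝ)
    (B₂ : Matrix (Fin m) (Fin p) ℝ) (B₂' : Matrix (Fin m) (Fin p') ℝ)
    (hB : B₁ * B₂ = 0) (hB' : B₁ * B₂' = 0)
    (w₀ w₁ w₂ : ℕ → ℝ) (w : Fin n → ℝ)
    (x x' : Fin m → ℝ) (y : Fin p → ℝ) (y' : Fin p' → ℝ)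
    (hx₁ : B₁.mulVec x = 0) (hx₂ : B₂.transpose.mulVec x = 0)
    (hx₁' : B₁.mulVec x' = 0) (hx₂' : B₂'.transpose.mulVec x' = 0)
    (c c' : ℕ → Fin m → ℝ)
    (hc0 : c 0 = B₁.transpose.mulVec w + x + B₂.mulVec y)
    (hc0' : c' 0 = B₁.transpose.mulVec w + x' + B₂'.mulVec y')
    (hrec : ∀ ℓ, c (ℓ + 1) =
      w₂ ℓ • (B₂ * B₂.transpose).mulVec (c ℓ) + w₁ ℓ • c ℓ +
        w₀ ℓ • (B₁.transpose * B₁).mulVec (c ℓ))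
    (hrec' : ∀ ℓ, c' (ℓ + 1) =
      w₂ ℓ • (B₂' * B₂'.transpose).mulVec (c' ℓ) + w₁ ℓ • c' ℓ +
        w₀ ℓ • (B₁.transpose * B₁).mulVec (c' ℓ)) :
    B₁.mulVec (c L) = B₁.mulVec (c' L) := by
  have key : ∀ (q : ℕ) (B : Matrix (Fin m) (Fin q) ℝ), B₁ * B = 0 →
      ∀ v : Fin q → ℝ, B₁.mulVec (B.mulVec v) = 0 := by
    intro q B hB v
    rw [Matrix.mulVec_mulVec, hB, Matrix.zero_mulVec]
  have key3 : ∀ (q : ℕ) (B : Matrix (Fin m) (Fin q) ℝ), B₁ * B = 0 →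
      ∀ v : Fin m → ℝ, B₁.mulVec ((B * B.transpose).mulVec v) = 0 := by
    intro q B hB v
    rw [Matrix.mulVec_mulVec, ← Matrix.mul_assoc, hB, Matrix.zero_mul,
      Matrix.zero_mulVec]
  have key2 : ∀ v : Fin m → ℝ,
      B₁.mulVec ((B₁.transpose * B₁).mulVec v) =
        (B₁ * B₁.transpose).mulVec (B₁.mulVec v) := by
    intro v
    simp [Matrix.mulVec_mulVec, Matrix.mul_assoc]
  induction L with
  | zero =>
    rw [hc0, hc0']
    simp only [Matrix.mulVec_add, hx₁, hx₁', key _ _ hB, key _ _ hB', add_zero]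
  | succ ℓ ih =>
    rw [hrec, hrec']
    simp only [Matrix.mulVec_add, Matrix.mulVec_smul]
    rw [key3 _ _ hB, key3 _ _ hB', key2, key2, ih]
end

section
/- Permutation equivariance of the SCoNe layer: if P₀, P₁, P₂ are permutation matrices and the boundary matrices are conjugated as B₁' = P₀B₁P₁^T, B₂' = P₁B₂P₂^T, then for the layer map F_{B₁,B₂}(c) = φ(B₂B₂^T c W₂ + cW₁ + B₁^TB₁cW₀) with elementwise φ, we have F_{B₁',B₂'}(P₁c) = P₁ F_{B₁,B₂}(c). -/
open Matrix

lemma perm_transpose_mul_cancel {a b : ℕ} (τ : Equiv.Perm (Fin a))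
    (M : Matrix (Fin a) (Fin b) ℝ) :
    (τ.permMatrix ℝ)ᵀ * ((τ.permMatrix ℝ) * M) = M := by
  rw [← PEquiv.toMatrix_symm, ← Equiv.toPEquiv_symm,
    PEquiv.toMatrix_toPEquiv_mul, PEquiv.toMatrix_toPEquiv_mul]
  ext i j
  simp

lemma perm_mul_map {a b : ℕ} (τ : Equiv.Perm (Fin a))
    (M : Matrix (Fin a) (Fin b) ℝ) (φ : ℝ → ℝ) :
    ((τ.permMatrix ℝ) * M).map φ = (τ.permMatrix ℝ) * M.map φ := by
  rw [PEquiv.toMatrix_toPEquiv_mul, PEquiv.toMatrix_toPEquiv_mul, submatrix_map]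

/-- Permutation equivariance of the SCoNe layer: conjugating the boundary
matrices by permutation matrices and permuting the input permutes the
output. -/
theorem scone_layer_permutation_equivariant {n m p F F' : ℕ}
    (φ : ℝ → ℝ)
    (B₁ : Matrix (Fin n) (Fin m) ℝ) (B₂ : Matrix (Fin m) (Fin p) ℝ)
    (σ₀ : Equiv.Perm (Fin n)) (σ₁ : Equiv.Perm (Fin m))
    (σ₂ : Equiv.Perm (Fin p))
    (W₀ W₁ W₂ : Matrix (Fin F) (Fin F') ℝ)
    (c : Matrix (Fin m) (Fin F) ℝ) :
    let P₀ := σ₀.permMatrix ℝ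
    let P₁ := σ₁.permMatrix ℝ
    let P₂ := σ₂.permMatrix ℝ
    let Lay : Matrix (Fin n) (Fin m) ℝ → Matrix (Fin m) (Fin p) ℝ →
        Matrix (Fin m) (Fin F) ℝ → Matrix (Fin m) (Fin F') ℝ :=
      fun A₁ A₂ z =>
        (A₂ * A₂.transpose * z * W₂ + z * W₁ +
          A₁.transpose * A₁ * z * W₀).map φ
    Lay (P₀ * B₁ * P₁.transpose) (P₁ * B₂ * P₂.transpose) (P₁ * c) =
      P₁ * Lay B₁ B₂ c := by
  intro P₀ P₁ P₂ Lay
  have h1 : (P₁ * B₂ * P₂ᵀ) * (P₁ * B₂ * P₂ᵀ)ᵀ * (P₁ * c) * W₂ =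
      P₁ * (B₂ * B₂ᵀ * c * W₂) := by
    simp only [transpose_mul, transpose_transpose, Matrix.mul_assoc]
    rw [perm_transpose_mul_cancel σ₂, perm_transpose_mul_cancel σ₁]
  have h3 : (P₀ * B₁ * P₁ᵀ)ᵀ * (P₀ * B₁ * P₁ᵀ) * (P₁ * c) * W₀ =
      P₁ * (B₁ᵀ * B₁ * c * W₀) := by
    simp only [transpose_mul, transpose_transpose, Matrix.mul_assoc]
    rw [perm_transpose_mul_cancel σ₁, perm_transpose_mul_cancel σ₀]
  show ((P₁ * B₂ * P₂ᵀ) * (P₁ * B₂ * P₂ᵀ)ᵀ * (P₁ * c) * W₂ + (P₁ * c) * W₁ +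
      (P₀ * B₁ * P₁ᵀ)ᵀ * (P₀ * B₁ * P₁ᵀ) * (P₁ * c) * W₀).map φ = _
  rw [h1, h3, Matrix.mul_assoc P₁ c W₁, ← Matrix.mul_add, ← Matrix.mul_add,
    perm_mul_map]
end

section
/- Orientation equivariance of the SCoNe layer with odd activation: if D₁, D₂ are diagonal ±1 matrices, D₀ = I, B₁' = B₁D₁, B₂' = D₁B₂D₂, and φ is odd, then F_{B₁',B₂'}(D₁c) = D₁ F_{B₁,B₂}(c), where F_{B₁,B₂}(c) = φ(B₂B₂^T c W₂ + cW₁ + B₁^TB₁cW₀). -/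
open Matrix

/-- Orientation equivariance of the SCoNe layer with an odd activation: for
diagonal ±1 matrices D₁, D₂ and boundary matrices reoriented as B₁D₁ and
D₁B₂D₂, the layer output on D₁c equals D₁ times the original output. -/
theorem scone_layer_orientation_equivariant {n m p F F' : ℕ}
    (φ : ℝ → ℝ) (hodd : ∀ t : ℝ, φ (-t) = -φ t)
    (B₁ : Matrix (Fin n) (Fin m) ℝ) (B₂ : Matrix (Fin m) (Fin p) ℝ)
    (d₁ : Fin m → ℝ) (d₂ : Fin p → ℝ)
    (hd₁ : ∀ i, d₁ i = 1 ∨ d₁ i = -1) (hd₂ : ∀ i, d₂ i = 1 ∨ d₂ i = -1)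
    (W₀ W₁ W₂ : Matrix (Fin F) (Fin F') ℝ)
    (c : Matrix (Fin m) (Fin F) ℝ) :
    let D₁ := Matrix.diagonal d₁
    let D₂ := Matrix.diagonal d₂
    let Lay : Matrix (Fin n) (Fin m) ℝ → Matrix (Fin m) (Fin p) ℝ →
        Matrix (Fin m) (Fin F) ℝ → Matrix (Fin m) (Fin F') ℝ :=
      fun A₁ A₂ z =>
        (A₂ * A₂.transpose * z * W₂ + z * W₁ +
          A₁.transpose * A₁ * z * W₀).map φ
    Lay (B₁ * D₁) (D₁ * B₂ * D₂) (D₁ * c) = D₁ * Lay B₁ B₂ c := by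
  have hD1 : Matrix.diagonal d₁ * Matrix.diagonal d₁ = 1 := by
    rw [Matrix.diagonal_mul_diagonal]
    have h : (fun i => d₁ i * d₁ i) = fun _ => (1 : ℝ) := by
      funext i; rcases hd₁ i with h | h <;> simp [h]
    rw [h]; exact Matrix.diagonal_one
  have hD2 : Matrix.diagonal d₂ * Matrix.diagonal d₂ = 1 := by
    rw [Matrix.diagonal_mul_diagonal]
    have h : (fun i => d₂ i * d₂ i) = fun _ => (1 : ℝ) := by
      funext i; rcases hd₂ i with h | h <;> simp [h]
    rw [h]; exact Matrix.diagonal_one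
  have h1 : ∀ {k : ℕ} (X : Matrix (Fin m) (Fin k) ℝ),
      Matrix.diagonal d₁ * (Matrix.diagonal d₁ * X) = X := by
    intro k X; rw [← Matrix.mul_assoc, hD1, Matrix.one_mul]
  have h2 : ∀ {k : ℕ} (X : Matrix (Fin p) (Fin k) ℝ),
      Matrix.diagonal d₂ * (Matrix.diagonal d₂ * X) = X := by
    intro k X; rw [← Matrix.mul_assoc, hD2, Matrix.one_mul]
  show (((Matrix.diagonal d₁ * B₂ * Matrix.diagonal d₂) *
        (Matrix.diagonal d₁ * B₂ * Matrix.diagonal d₂).transpose *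
        (Matrix.diagonal d₁ * c) * W₂ + (Matrix.diagonal d₁ * c) * W₁ +
        (B₁ * Matrix.diagonal d₁).transpose * (B₁ * Matrix.diagonal d₁) *
        (Matrix.diagonal d₁ * c) * W₀).map φ) =
      Matrix.diagonal d₁ *
        ((B₂ * B₂.transpose * c * W₂ + c * W₁ +
          B₁.transpose * B₁ * c * W₀).map φ)
  have harg : (Matrix.diagonal d₁ * B₂ * Matrix.diagonal d₂) *
        (Matrix.diagonal d₁ * B₂ * Matrix.diagonal d₂).transpose *
        (Matrix.diagonal d₁ * c) * W₂ + (Matrix.diagonal d₁ * c) * W₁ +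
        (B₁ * Matrix.diagonal d₁).transpose * (B₁ * Matrix.diagonal d₁) *
        (Matrix.diagonal d₁ * c) * W₀ =
      Matrix.diagonal d₁ *
        (B₂ * B₂.transpose * c * W₂ + c * W₁ + B₁.transpose * B₁ * c * W₀) := by
    simp only [Matrix.transpose_mul, Matrix.diagonal_transpose, Matrix.mul_add,
      Matrix.mul_assoc, h1, h2]
  rw [harg]
  ext i j
  rw [Matrix.map_apply, Matrix.diagonal_mul, Matrix.diagonal_mul, Matrix.map_apply]
  rcases hd₁ i with h | h
  · rw [h, one_mul, one_mul]
  · rw [h, neg_one_mul, neg_one_mul, hodd]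
end
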